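/- arXiv:2602.00172 — 2 statements merged into one kernel-verified Lean document; each statement's English description precedes it below -/
import Mathlib

section
/- Let z = (z₁, z₂) be a standard two-dimensional Gaussian, and let y = -sgn(z₁z₂). Then conditioned on y = 1, E[z₁z₂ | y=1] = -2/π, and conditioned on y = -1, E[z₁z₂ | y=-1] = 2/π; moreover E[z₁² | y=±1] = E[z₂² | y=±1] = 1. -/
/-!
On a quadrant a product integrand factors into half-line integrals, and `{z₁z₂ < 0}`,
`{z₁z₂ > 0}` are unions of two opposite quadrants. The standard Gaussian is symmetric and
atomless, so each half-line has mass `1/2`, the two half-line integrals of an odd function differ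
by a sign, and those of `x ↦ x²` add up to the variance `1`. The only genuine computation is the
half-normal mean `∫_{x > 0} x dγ = 1/√(2π)`, whence `E[z₁z₂; z₁z₂ < 0] = -2 · (1/√(2π))² = -1/π`.
-/

open MeasureTheory ProbabilityTheory Real

noncomputable def stdGaussian2 : Measure (ℝ × ℝ) :=
  (gaussianReal 0 1).prod (gaussianReal 0 1)

open Set NNReal

section HalfLines

variable {μ : Measure ℝ} {f : ℝ → ℝ}

lemma setIntegral_Iio_eq_setIntegral_Ioi_comp_neg [μ.IsNegInvariant] (f : ℝ → ℝ) :
    ∫ x in Iio 0, f x ∂μ = ∫ x in Ioi 0, f (-x) ∂μ := by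
  simpa using ((Measure.measurePreserving_neg μ).setIntegral_preimage_emb
    (Homeomorph.neg ℝ).measurableEmbedding f (Iio 0)).symm

lemma setIntegral_Ioi_add_setIntegral_Iio [NullSingletonClass μ] (hf : Integrable f μ) :
    ∫ x in Ioi 0, f x ∂μ + ∫ x in Iio 0, f x ∂μ = ∫ x, f x ∂μ := by
  rw [← integral_Ici_eq_integral_Ioi, ← compl_Ici]
  exact integral_add_compl measurableSet_Ici hf

lemma Function.Odd.setIntegral_Iio_eq [μ.IsNegInvariant] (hf : f.Odd) :
    ∫ x in Iio 0, f x ∂μ = -∫ x in Ioi 0, f x ∂μ := by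
  simp only [setIntegral_Iio_eq_setIntegral_Ioi_comp_neg, hf _, integral_neg]

lemma measureReal_Iio_eq_measureReal_Ioi [μ.IsNegInvariant] : μ.real (Iio 0) = μ.real (Ioi 0) := by
  simpa using setIntegral_Iio_eq_setIntegral_Ioi_comp_neg (μ := μ) fun _ ↦ (1 : ℝ)

variable [IsProbabilityMeasure μ] [μ.IsNegInvariant] [NullSingletonClass μ]

lemma measureReal_Ioi_zero_eq_half : μ.real (Ioi 0) = 1 / 2 := by
  have h := setIntegral_Ioi_add_setIntegral_Iio (integrable_const (1 : ℝ) (μ := μ))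
  simp only [integral_const, measureReal_restrict_apply_univ, smul_eq_mul, mul_one, probReal_univ,
    measureReal_Iio_eq_measureReal_Ioi] at h
  linarith

lemma measureReal_Iio_zero_eq_half : μ.real (Iio 0) = 1 / 2 := by
  rw [measureReal_Iio_eq_measureReal_Ioi, measureReal_Ioi_zero_eq_half]

end HalfLines

section SignQuadrants

variable {μ ν : Measure ℝ} [SFinite μ] [SFinite ν] {f g : ℝ → ℝ}

lemma setIntegral_mul_neg_prod (hf : Integrable f μ) (hg : Integrable g ν) :
    ∫ p in {p : ℝ × ℝ | p.1 * p.2 < 0}, f p.1 * g p.2 ∂μ.prod ν =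
      (∫ x in Ioi 0, f x ∂μ) * (∫ y in Iio 0, g y ∂ν) +
        (∫ x in Iio 0, f x ∂μ) * (∫ y in Ioi 0, g y ∂ν) := by
  have hdisj : Disjoint (Ioi (0 : ℝ) ×ˢ Iio (0 : ℝ)) (Iio 0 ×ˢ Ioi 0) :=
    disjoint_left.mpr fun _ hp hq ↦ lt_asymm (mem_Ioi.mp hp.1) hq.1
  have hS : {p : ℝ × ℝ | p.1 * p.2 < 0} = Ioi 0 ×ˢ Iio 0 ∪ Iio 0 ×ˢ Ioi 0 := by
    ext p; simp [mul_neg_iff]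
  rw [hS, setIntegral_union hdisj (measurableSet_Iio.prod measurableSet_Ioi)
    (hf.mul_prod hg).integrableOn (hf.mul_prod hg).integrableOn,
    setIntegral_prod_mul, setIntegral_prod_mul]

lemma setIntegral_mul_pos_prod (hf : Integrable f μ) (hg : Integrable g ν) :
    ∫ p in {p : ℝ × ℝ | 0 < p.1 * p.2}, f p.1 * g p.2 ∂μ.prod ν =
      (∫ x in Ioi 0, f x ∂μ) * (∫ y in Ioi 0, g y ∂ν) +
        (∫ x in Iio 0, f x ∂μ) * (∫ y in Iio 0, g y ∂ν) := by
  have hdisj : Disjoint (Ioi (0 : ℝ) ×ˢ Ioi (0 : ℝ)) (Iio 0 ×ˢ Iio 0) :=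
    disjoint_left.mpr fun _ hp hq ↦ lt_asymm (mem_Ioi.mp hp.1) hq.1
  have hS : {p : ℝ × ℝ | 0 < p.1 * p.2} = Ioi 0 ×ˢ Ioi 0 ∪ Iio 0 ×ˢ Iio 0 := by
    ext p; simp [mul_pos_iff]
  rw [hS, setIntegral_union hdisj (measurableSet_Iio.prod measurableSet_Iio)
    (hf.mul_prod hg).integrableOn (hf.mul_prod hg).integrableOn,
    setIntegral_prod_mul, setIntegral_prod_mul]

lemma setIntegral_mul_neg_prod_of_odd [μ.IsNegInvariant] [ν.IsNegInvariant]
    (hf : Integrable f μ) (hg : Integrable g ν) (hf_odd : f.Odd) (hg_odd : g.Odd) :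
    ∫ p in {p : ℝ × ℝ | p.1 * p.2 < 0}, f p.1 * g p.2 ∂μ.prod ν =
      -2 * ((∫ x in Ioi 0, f x ∂μ) * ∫ y in Ioi 0, g y ∂ν) := by
  rw [setIntegral_mul_neg_prod hf hg, hf_odd.setIntegral_Iio_eq, hg_odd.setIntegral_Iio_eq]
  ring

lemma setIntegral_mul_pos_prod_of_odd [μ.IsNegInvariant] [ν.IsNegInvariant]
    (hf : Integrable f μ) (hg : Integrable g ν) (hf_odd : f.Odd) (hg_odd : g.Odd) :
    ∫ p in {p : ℝ × ℝ | 0 < p.1 * p.2}, f p.1 * g p.2 ∂μ.prod ν =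
      2 * ((∫ x in Ioi 0, f x ∂μ) * ∫ y in Ioi 0, g y ∂ν) := by
  rw [setIntegral_mul_pos_prod hf hg, hf_odd.setIntegral_Iio_eq, hg_odd.setIntegral_Iio_eq]
  ring

variable [NullSingletonClass μ] [NullSingletonClass ν]

lemma setIntegral_fst_mul_neg_prod [IsProbabilityMeasure ν] [ν.IsNegInvariant]
    (hf : Integrable f μ) :
    ∫ p in {p : ℝ × ℝ | p.1 * p.2 < 0}, f p.1 ∂μ.prod ν = (∫ x, f x ∂μ) / 2 := by
  have h := setIntegral_mul_neg_prod hf (integrable_const (1 : ℝ) (μ := ν))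
  simp only [mul_one, setIntegral_const, smul_eq_mul, measureReal_Ioi_zero_eq_half,
    measureReal_Iio_zero_eq_half] at h
  rw [h, ← setIntegral_Ioi_add_setIntegral_Iio hf]
  ring

lemma setIntegral_fst_mul_pos_prod [IsProbabilityMeasure ν] [ν.IsNegInvariant]
    (hf : Integrable f μ) :
    ∫ p in {p : ℝ × ℝ | 0 < p.1 * p.2}, f p.1 ∂μ.prod ν = (∫ x, f x ∂μ) / 2 := by
  have h := setIntegral_mul_pos_prod hf (integrable_const (1 : ℝ) (μ := ν))
  simp only [mul_one, setIntegral_const, smul_eq_mul, measureReal_Ioi_zero_eq_half,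
    measureReal_Iio_zero_eq_half] at h
  rw [h, ← setIntegral_Ioi_add_setIntegral_Iio hf]
  ring

lemma setIntegral_snd_mul_neg_prod [IsProbabilityMeasure μ] [μ.IsNegInvariant]
    (hg : Integrable g ν) :
    ∫ p in {p : ℝ × ℝ | p.1 * p.2 < 0}, g p.2 ∂μ.prod ν = (∫ y, g y ∂ν) / 2 := by
  have h := setIntegral_mul_neg_prod (integrable_const (1 : ℝ) (μ := μ)) hg
  simp only [one_mul, setIntegral_const, smul_eq_mul, measureReal_Ioi_zero_eq_half,
    measureReal_Iio_zero_eq_half] at h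
  rw [h, ← setIntegral_Ioi_add_setIntegral_Iio hg]
  ring

lemma setIntegral_snd_mul_pos_prod [IsProbabilityMeasure μ] [μ.IsNegInvariant]
    (hg : Integrable g ν) :
    ∫ p in {p : ℝ × ℝ | 0 < p.1 * p.2}, g p.2 ∂μ.prod ν = (∫ y, g y ∂ν) / 2 := by
  have h := setIntegral_mul_pos_prod (integrable_const (1 : ℝ) (μ := μ)) hg
  simp only [one_mul, setIntegral_const, smul_eq_mul, measureReal_Ioi_zero_eq_half,
    measureReal_Iio_zero_eq_half] at h
  rw [h, ← setIntegral_Ioi_add_setIntegral_Iio hg]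
  ring

variable [IsProbabilityMeasure μ] [IsProbabilityMeasure ν] [ν.IsNegInvariant]

lemma measureReal_mul_neg_prod : (μ.prod ν).real {p : ℝ × ℝ | p.1 * p.2 < 0} = 1 / 2 := by
  simpa using setIntegral_fst_mul_neg_prod (μ := μ) (ν := ν) (integrable_const (1 : ℝ))

lemma measureReal_mul_pos_prod : (μ.prod ν).real {p : ℝ × ℝ | 0 < p.1 * p.2} = 1 / 2 := by
  simpa using setIntegral_fst_mul_pos_prod (μ := μ) (ν := ν) (integrable_const (1 : ℝ))

end SignQuadrants

lemma integral_Ioi_mul_exp_neg_mul_sq {b : ℝ} (hb : 0 < b) :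
    ∫ x in Ioi 0, x * exp (-b * x ^ 2) = (2 * b)⁻¹ := by
  have h := integral_mul_cexp_neg_mul_sq (b := (b : ℂ)) (by simpa)
  rw [← Complex.ofReal_inj, ← integral_complex_ofReal]
  push_cast
  exact h

instance isNegInvariant_gaussianReal (v : ℝ≥0) : (gaussianReal 0 v).IsNegInvariant :=
  ⟨(gaussianReal_map_neg (μ := 0) (v := v)).trans (by rw [neg_zero])⟩

lemma integral_sq_gaussianReal (v : ℝ≥0) : ∫ x, x ^ 2 ∂gaussianReal 0 v = v := by
  simpa [variance_eq_integral measurable_id'.aemeasurable] using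
    variance_fun_id_gaussianReal (μ := 0) (v := v)

lemma setIntegral_Ioi_id_gaussianReal {v : ℝ≥0} (hv : v ≠ 0) :
    ∫ x in Ioi 0, x ∂gaussianReal 0 v = √(v / (2 * π)) := by
  rw [gaussianReal_of_var_ne_zero 0 hv, setIntegral_withDensity_eq_setIntegral_toReal_smul
    (measurable_gaussianPDF 0 v) (ae_of_all _ fun _ ↦ gaussianPDF_lt_top) _ measurableSet_Ioi]
  calc ∫ x in Ioi 0, (gaussianPDF 0 v x).toReal • x
      = ∫ x in Ioi 0, (√(2 * π * v))⁻¹ * (x * exp (-(2 * v : ℝ)⁻¹ * x ^ 2)) := by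
        refine setIntegral_congr_fun measurableSet_Ioi fun x _ ↦ ?_
        rw [toReal_gaussianPDF, gaussianPDFReal, smul_eq_mul]
        ring_nf
    _ = √(v / (2 * π)) := by
        have hv₀ : (0 : ℝ) < v := by positivity
        rw [integral_const_mul, integral_Ioi_mul_exp_neg_mul_sq (by positivity),
          sqrt_div hv₀.le, sqrt_mul (by positivity)]
        field_simp
        rw [sq_sqrt hv₀.le]

/-- XOR conditional moments: conditioning on y = 1 (i.e. z₁z₂ < 0) and y = -1
(i.e. z₁z₂ > 0). -/
theorem xor_conditional_moments :
    (∫ p in {p : ℝ × ℝ | p.1 * p.2 < 0}, p.1 * p.2 ∂stdGaussian2) /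
      (stdGaussian2 {p : ℝ × ℝ | p.1 * p.2 < 0}).toReal = -2/π ∧
    (∫ p in {p : ℝ × ℝ | 0 < p.1 * p.2}, p.1 * p.2 ∂stdGaussian2) /
      (stdGaussian2 {p : ℝ × ℝ | 0 < p.1 * p.2}).toReal = 2/π ∧
    (∫ p in {p : ℝ × ℝ | p.1 * p.2 < 0}, p.1^2 ∂stdGaussian2) /
      (stdGaussian2 {p : ℝ × ℝ | p.1 * p.2 < 0}).toReal = 1 ∧
    (∫ p in {p : ℝ × ℝ | p.1 * p.2 < 0}, p.2^2 ∂stdGaussian2) /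
      (stdGaussian2 {p : ℝ × ℝ | p.1 * p.2 < 0}).toReal = 1 ∧
    (∫ p in {p : ℝ × ℝ | 0 < p.1 * p.2}, p.1^2 ∂stdGaussian2) /
      (stdGaussian2 {p : ℝ × ℝ | 0 < p.1 * p.2}).toReal = 1 ∧
    (∫ p in {p : ℝ × ℝ | 0 < p.1 * p.2}, p.2^2 ∂stdGaussian2) /
      (stdGaussian2 {p : ℝ × ℝ | 0 < p.1 * p.2}).toReal = 1 := by
  have : NullSingletonClass (gaussianReal 0 1) := nullSingletonClass_gaussianReal one_ne_zero
  have hid : Integrable (fun x : ℝ ↦ x) (gaussianReal 0 1) :=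
    (memLp_id_gaussianReal 1).integrable le_rfl
  have hsq : Integrable (fun x : ℝ ↦ x ^ 2) (gaussianReal 0 1) :=
    (memLp_id_gaussianReal 2).integrable_sq
  have hid_odd : (fun x : ℝ ↦ x).Odd := fun _ ↦ rfl
  have hhalf_mean : ∫ x in Ioi 0, x ∂gaussianReal 0 1 = √(1 / (2 * π)) := by
    simpa using setIntegral_Ioi_id_gaussianReal (one_ne_zero (α := ℝ≥0))
  rw [stdGaussian2, ← measureReal_def, ← measureReal_def, measureReal_mul_neg_prod,
    measureReal_mul_pos_prod, setIntegral_mul_neg_prod_of_odd hid hid hid_odd hid_odd,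
    setIntegral_mul_pos_prod_of_odd hid hid hid_odd hid_odd, hhalf_mean,
    Real.mul_self_sqrt (by positivity), setIntegral_fst_mul_neg_prod hsq,
    setIntegral_fst_mul_pos_prod hsq, setIntegral_snd_mul_neg_prod hsq,
    setIntegral_snd_mul_pos_prod hsq, integral_sq_gaussianReal]
  refine ⟨?_, ?_, ?_, ?_, ?_, ?_⟩ <;> field_simp <;> norm_num
end

section
/- Let X₁, X₂ be independent standard normal random variables. There exists a constant C > 0 such that for all N ≥ 2, E[e^{-N·||X₁|-|X₂||}] ≤ C·(log N)/N. -/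
/-! Since `exp (-N s) ≤ 1`, the expectation is at most `P(||X₁| - |X₂|| ≤ t) + exp (-N t)`.
The Gaussian density is bounded by `1/2`, and for fixed `X₂` the event confines `X₁` to two
intervals of length `2t`, so the probability is at most `2t`. Taking `t = log N / N` gives
`2 log N / N + 1 / N ≤ 4 log N / N`. -/

open MeasureTheory ProbabilityTheory Real

instance : IsProbabilityMeasure stdGaussian2 := by
  unfold stdGaussian2; infer_instance

lemma gaussianPDFReal_le (μ : ℝ) (v : NNReal) (x : ℝ) :
    gaussianPDFReal μ v x ≤ (√(2 * π * v))⁻¹ := by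
  rw [gaussianPDFReal]
  refine mul_le_of_le_one_right (by positivity) (exp_le_one_iff.mpr ?_)
  exact div_nonpos_of_nonpos_of_nonneg (neg_nonpos.mpr (sq_nonneg _)) (by positivity)

lemma gaussianReal_le_smul_volume (μ : ℝ) {v : NNReal} (hv : v ≠ 0) (s : Set ℝ) :
    gaussianReal μ v s ≤ ENNReal.ofReal (√(2 * π * v))⁻¹ * volume s := by
  rw [gaussianReal_apply μ hv, ← setLIntegral_const]
  exact lintegral_mono fun x => ENNReal.ofReal_le_ofReal (gaussianPDFReal_le μ v x)

lemma inv_sqrt_two_pi_le_half : (√(2 * π * (1 : NNReal)))⁻¹ ≤ 1 / 2 := by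
  have h4 : (4 : ℝ) ≤ 2 * π * (1 : NNReal) := by push_cast; linarith [pi_gt_three]
  have h2 : (2 : ℝ) ≤ √(2 * π * (1 : NNReal)) := by
    simpa [show √(4 : ℝ) = 2 by rw [show (4 : ℝ) = 2 ^ 2 by norm_num, sqrt_sq zero_le_two]]
      using sqrt_le_sqrt h4
  rw [one_div]
  exact inv_anti₀ two_pos h2

lemma volume_abs_sub_abs_le (a : ℝ) {t : ℝ} (ht : 0 ≤ t) :
    volume {x : ℝ | |(|x| - a)| ≤ t} ≤ ENNReal.ofReal (4 * t) := by
  have hsub : {x : ℝ | |(|x| - a)| ≤ t} ⊆ Set.Icc (a - t) (a + t) ∪ Set.Icc (-a - t) (-a + t) := by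
    intro x hx
    replace hx : -t ≤ |x| - a ∧ |x| - a ≤ t := abs_le.mp hx
    rcases le_or_gt 0 x with hx0 | hx0
    · rw [abs_of_nonneg hx0] at hx
      exact Or.inl ⟨by linarith, by linarith⟩
    · rw [abs_of_neg hx0] at hx
      exact Or.inr ⟨by linarith, by linarith⟩
  calc volume {x : ℝ | |(|x| - a)| ≤ t}
      ≤ volume (Set.Icc (a - t) (a + t)) + volume (Set.Icc (-a - t) (-a + t)) :=
        (measure_mono hsub).trans (measure_union_le _ _)
    _ = ENNReal.ofReal (4 * t) := by
        rw [volume_Icc, volume_Icc, ← ENNReal.ofReal_add (by linarith) (by linarith)]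
        ring_nf

lemma gaussianReal_abs_sub_abs_le (a : ℝ) {t : ℝ} (ht : 0 ≤ t) :
    gaussianReal 0 1 {x : ℝ | |(|x| - a)| ≤ t} ≤ ENNReal.ofReal (2 * t) :=
  calc gaussianReal 0 1 {x : ℝ | |(|x| - a)| ≤ t}
      ≤ ENNReal.ofReal (1 / 2) * ENNReal.ofReal (4 * t) :=
        (gaussianReal_le_smul_volume 0 one_ne_zero _).trans <|
          mul_le_mul' (ENNReal.ofReal_le_ofReal inv_sqrt_two_pi_le_half)
            (volume_abs_sub_abs_le a ht)
    _ = ENNReal.ofReal (2 * t) := by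
        rw [← ENNReal.ofReal_mul (by norm_num)]; ring_nf

lemma Measure.prod_apply_le_of_forall_slice_le {α β : Type*} [MeasurableSpace α]
    [MeasurableSpace β] (μ : Measure α) [IsProbabilityMeasure μ] (ν : Measure β) [SFinite ν]
    {s : Set (α × β)} (hs : MeasurableSet s) {c : ENNReal} (h : ∀ x, ν (Prod.mk x ⁻¹' s) ≤ c) :
    μ.prod ν s ≤ c := by
  rw [Measure.prod_apply hs]
  calc ∫⁻ x, ν (Prod.mk x ⁻¹' s) ∂μ ≤ ∫⁻ _, c ∂μ := lintegral_mono h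
    _ = c := by simp

lemma stdGaussian2_real_abs_sub_abs_le {t : ℝ} (ht : 0 ≤ t) :
    stdGaussian2.real {p : ℝ × ℝ | |(|p.1| - |p.2|)| ≤ t} ≤ 2 * t := by
  refine ENNReal.toReal_le_of_le_ofReal (by linarith) ?_
  refine Measure.prod_apply_le_of_forall_slice_le _ _
    (measurableSet_le (by fun_prop) measurable_const) fun x => ?_
  have hslice : Prod.mk x ⁻¹' {p : ℝ × ℝ | |(|p.1| - |p.2|)| ≤ t} =
      {y : ℝ | |(|y| - |x|)| ≤ t} := by
    ext y; simp [abs_sub_comm]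
  rw [hslice]
  exact gaussianReal_abs_sub_abs_le |x| ht

lemma integral_exp_neg_mul_le_measureReal_add {α : Type*} [MeasurableSpace α]
    (μ : Measure α) [IsProbabilityMeasure μ] {f : α → ℝ} (hf : Measurable f)
    (hf0 : ∀ x, 0 ≤ f x) {N : ℝ} (hN : 0 ≤ N) (t : ℝ) :
    ∫ x, exp (-N * f x) ∂μ ≤ μ.real {x | f x ≤ t} + exp (-N * t) := by
  set A := {x | f x ≤ t}
  have hA : MeasurableSet A := measurableSet_le hf measurable_const
  have hpt : ∀ x, exp (-N * f x) ≤ A.indicator 1 x + exp (-N * t) := by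
    intro x
    by_cases hx : x ∈ A
    · rw [Set.indicator_of_mem hx, Pi.one_apply]
      have : exp (-N * f x) ≤ 1 := exp_le_one_iff.mpr (by nlinarith [hf0 x])
      linarith [exp_pos (-N * t)]
    · rw [Set.indicator_of_notMem hx, zero_add, exp_le_exp]
      have : t < f x := not_le.mp hx
      nlinarith
  have hint : Integrable (fun x => exp (-N * f x)) μ := by
    refine (integrable_const (1 : ℝ)).mono (by fun_prop) (ae_of_all _ fun x => ?_)
    rw [norm_one, norm_of_nonneg (exp_nonneg _), exp_le_one_iff]
    nlinarith [hf0 x]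
  calc ∫ x, exp (-N * f x) ∂μ ≤ ∫ x, (A.indicator 1 x + exp (-N * t)) ∂μ :=
        integral_mono hint (((integrable_const 1).indicator hA).add (integrable_const _)) hpt
    _ = μ.real A + exp (-N * t) := by
        rw [integral_add ((integrable_const 1).indicator hA) (integrable_const _),
          integral_indicator_one hA, integral_const, probReal_univ, one_smul]

theorem folded_diff_laplace_upper :
    ∃ C : ℝ, 0 < C ∧ ∀ N : ℝ, 2 ≤ N →
      (∫ p, Real.exp (-N * abs (|p.1| - |p.2|)) ∂stdGaussian2) ≤ C * Real.log N / N := by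
  refine ⟨4, by norm_num, fun N hN => ?_⟩
  have hN0 : 0 < N := by linarith
  have hlog : 1 / 2 ≤ log N := by
    linarith [log_two_gt_d9, log_le_log (by norm_num) hN]
  have ht : 0 ≤ log N / N := by positivity
  have hexp : exp (-N * (log N / N)) = 1 / N := by
    rw [neg_mul, mul_div_cancel₀ _ hN0.ne', exp_neg, exp_log hN0, one_div]
  calc (∫ p, exp (-N * |(|p.1| - |p.2|)|) ∂stdGaussian2)
      ≤ stdGaussian2.real {p | |(|p.1| - |p.2|)| ≤ log N / N} + exp (-N * (log N / N)) :=
        integral_exp_neg_mul_le_measureReal_add _ (by fun_prop) (fun _ => abs_nonneg _)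
          hN0.le _
    _ ≤ 2 * (log N / N) + 2 * log N / N := by
        rw [hexp]
        gcongr
        · exact stdGaussian2_real_abs_sub_abs_le ht
        · linarith
    _ = 4 * log N / N := by ring
end
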